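/- arXiv:1209.5698 — 2 statements merged into one kernel-verified Lean document; each statement's English description precedes it below -/
import Mathlib

section
/- For every real t and every positive integer n, the sum R_n(t) := ∑_{j ∈ ℤ, |t − jπ| > nπ} 1/(t − jπ)² satisfies R_n(t) ≤ (2/π²)(1/n² + 1/n). -/
-- summability of the shifted p-series
lemma aux_summable_h (n : ℕ) : Summable (fun k : ℕ => 1 / ((n : ℝ) + k) ^ 2) := by
  have h0 : Summable (fun m : ℕ => 1 / (m : ℝ) ^ 2) :=
    Real.summable_one_div_nat_pow.mpr one_lt_two
  have := (summable_nat_add_iff (f := fun m : ℕ => 1 / (m : ℝ) ^ 2) n).mpr h0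
  refine this.congr fun k => ?_
  push_cast
  ring_nf

lemma aux_tsum_h (n : ℕ) (hn : 1 ≤ n) :
    (∑' k : ℕ, 1 / ((n : ℝ) + k) ^ 2) ≤ 1 / (n : ℝ) ^ 2 + 1 / (n : ℝ) := by
  have hn' : (1:ℝ) ≤ n := by exact_mod_cast hn
  apply Real.tsum_le_of_sum_range_le (fun k => by positivity)
  intro N
  have key : ∀ M : ℕ, ∑ i ∈ Finset.range (M + 1), 1 / ((n : ℝ) + i) ^ 2
      ≤ 1 / (n : ℝ) ^ 2 + 1 / (n : ℝ) - 1 / ((n : ℝ) + M) := by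
    intro M
    induction M with
    | zero => simp
    | succ M ih =>
      rw [Finset.sum_range_succ]
      have hM : (1:ℝ) ≤ (n : ℝ) + M := by
        have : (0:ℝ) ≤ M := Nat.cast_nonneg M
        linarith
      have hstep : 1 / ((n : ℝ) + ((M:ℝ) + 1)) ^ 2
          ≤ 1 / ((n : ℝ) + M) - 1 / ((n : ℝ) + ((M:ℝ) + 1)) := by
        have h1 : (0:ℝ) < (n : ℝ) + M := by linarith
        have h2 : (0:ℝ) < (n : ℝ) + ((M:ℝ) + 1) := by linarith
        rw [div_sub_div _ _ (ne_of_gt h1) (ne_of_gt h2), div_le_div_iff₀ (by positivity) (by positivity)]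
        nlinarith
      push_cast
      linarith
  cases N with
  | zero =>
    simp
    positivity
  | succ M =>
    have := key M
    have hpos : (0:ℝ) < (n : ℝ) + M := by
      have : (0:ℝ) ≤ M := Nat.cast_nonneg M
      linarith
    have : (0:ℝ) ≤ 1 / ((n:ℝ) + M) := by positivity
    linarith [key M]

noncomputable def gseq (n : ℕ) : ℕ → ℝ := fun k => 1 / Real.pi ^ 2 * (1 / ((n : ℝ) + k) ^ 2)

noncomputable def Gseq (n : ℕ) : ℤ → ℝ :=
  fun m => if 0 ≤ m then gseq n m.toNat else gseq n (-(m + 1)).toNat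

lemma gseq_nonneg (n : ℕ) (k : ℕ) : 0 ≤ gseq n k := by
  unfold gseq; positivity

lemma Gseq_nat (n : ℕ) (k : ℕ) : Gseq n (k : ℤ) = gseq n k := by
  simp [Gseq]

lemma Gseq_neg (n : ℕ) (k : ℕ) : Gseq n (-((k : ℤ) + 1)) = gseq n k := by
  have h : ¬ (0:ℤ) ≤ -((k:ℤ) + 1) := by omega
  rw [Gseq, if_neg h]
  congr 1
  omega

lemma Gseq_nonneg (n : ℕ) (m : ℤ) : 0 ≤ Gseq n m := by
  rw [Gseq]
  split <;> exact gseq_nonneg _ _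

lemma gseq_summable (n : ℕ) : Summable (gseq n) :=
  (aux_summable_h n).mul_left _

lemma Gseq_nat_fun (n : ℕ) : (fun k : ℕ => Gseq n (k : ℤ)) = gseq n :=
  funext (Gseq_nat n)

lemma Gseq_neg_fun (n : ℕ) : (fun k : ℕ => Gseq n (-((k : ℤ) + 1))) = gseq n :=
  funext (Gseq_neg n)

lemma Gseq_summable (n : ℕ) : Summable (Gseq n) :=
  Summable.of_nat_of_neg_add_one ((Gseq_nat_fun n) ▸ gseq_summable n)
    ((Gseq_neg_fun n) ▸ gseq_summable n)

lemma tsum_Gseq_le (n : ℕ) (hn : 1 ≤ n) :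
    (∑' m : ℤ, Gseq n m) ≤ 2 / Real.pi ^ 2 * (1 / (n : ℝ) ^ 2 + 1 / (n : ℝ)) := by
  have hπ : (0:ℝ) < Real.pi := Real.pi_pos
  rw [tsum_of_nat_of_neg_add_one ((Gseq_nat_fun n) ▸ gseq_summable n)
    ((Gseq_neg_fun n) ▸ gseq_summable n), Gseq_nat_fun, Gseq_neg_fun]
  have h1 : (∑' k : ℕ, gseq n k) = 1 / Real.pi ^ 2 * ∑' k : ℕ, 1 / ((n : ℝ) + k) ^ 2 := by
    simp only [gseq]
    exact tsum_mul_left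
  rw [h1]
  have h2 := aux_tsum_h n hn
  have h3 : (0:ℝ) ≤ 1 / Real.pi ^ 2 := by positivity
  have h4 := mul_le_mul_of_nonneg_left h2 h3
  rw [show (2:ℝ) / Real.pi ^ 2 * (1 / (n:ℝ) ^ 2 + 1 / (n:ℝ))
      = 1 / Real.pi ^ 2 * (1 / (n:ℝ) ^ 2 + 1 / (n:ℝ))
        + 1 / Real.pi ^ 2 * (1 / (n:ℝ) ^ 2 + 1 / (n:ℝ)) from by ring]
  linarith

lemma aux_bound (x a : ℝ) (ha : 0 < a) (h : a * Real.pi ≤ |x|) :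
    1 / x ^ 2 ≤ 1 / Real.pi ^ 2 * (1 / a ^ 2) := by
  have hπ : (0:ℝ) < Real.pi := Real.pi_pos
  have h2 : (a * Real.pi) ^ 2 ≤ x ^ 2 := by
    rw [← sq_abs x]
    exact pow_le_pow_left₀ (by positivity) h 2
  calc 1 / x ^ 2 ≤ 1 / (a * Real.pi) ^ 2 := by
        apply one_div_le_one_div_of_le (by positivity) h2
    _ = 1 / Real.pi ^ 2 * (1 / a ^ 2) := by
        rw [mul_pow]; ring

noncomputable def psiFun (t : ℝ) (n : ℕ) (j : ℤ) : ℤ :=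
  if 0 < t - j * Real.pi then -(((⌊t / Real.pi⌋ - j - n).toNat : ℤ) + 1)
  else ((j - ⌊t / Real.pi⌋ - 1 - n).toNat : ℤ)

theorem tail_sum_bound (t : ℝ) (n : ℕ) (hn : 1 ≤ n) :
    Summable (fun j : {j : ℤ // (n : ℝ) * Real.pi < |t - j * Real.pi|} =>
      1 / (t - (j : ℤ) * Real.pi) ^ 2) ∧
    (∑' j : {j : ℤ // (n : ℝ) * Real.pi < |t - j * Real.pi|},
        1 / (t - (j : ℤ) * Real.pi) ^ 2) ≤
      2 / Real.pi ^ 2 * (1 / (n : ℝ) ^ 2 + 1 / (n : ℝ)) := by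
  have hπ : (0:ℝ) < Real.pi := Real.pi_pos
  have hn1 : (1:ℝ) ≤ n := by exact_mod_cast hn
  have hnπ : (0:ℝ) < (n:ℝ) * Real.pi := by positivity
  set s : ℤ := ⌊t / Real.pi⌋ with hsdef
  have hsle : (s : ℝ) ≤ t / Real.pi := Int.floor_le _
  have hslt : t / Real.pi < (s : ℝ) + 1 := Int.lt_floor_add_one _
  have hsle' : (s : ℝ) * Real.pi ≤ t := by
    rw [← le_div_iff₀ hπ]; exact hsle
  have hslt' : t < ((s : ℝ) + 1) * Real.pi := by
    rw [← div_lt_iff₀ hπ]; exact hslt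
  -- facts in the positive case
  have hposfacts : ∀ j : ℤ, (n : ℝ) * Real.pi < |t - j * Real.pi| →
      0 < t - (j : ℝ) * Real.pi →
      j + n ≤ s ∧ ((s : ℝ) - j) * Real.pi ≤ t - j * Real.pi := by
    intro j hj hpos
    have habs : (n : ℝ) * Real.pi < t - j * Real.pi := by rwa [abs_of_pos hpos] at hj
    constructor
    · apply Int.le_floor.mpr
      push_cast
      rw [le_div_iff₀ hπ]
      nlinarith
    · nlinarith
  -- facts in the negative case
  have hnegfacts : ∀ j : ℤ, (n : ℝ) * Real.pi < |t - j * Real.pi| →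
      ¬ (0 < t - (j : ℝ) * Real.pi) →
      s + n + 1 ≤ j ∧ ((j : ℝ) - s - 1) * Real.pi ≤ (j : ℝ) * Real.pi - t := by
    intro j hj hneg
    have hne : t - (j : ℝ) * Real.pi ≠ 0 := by
      intro h0
      rw [h0, abs_zero] at hj
      linarith
    have hlt : t - (j : ℝ) * Real.pi < 0 := lt_of_le_of_ne (not_lt.mp hneg) hne
    have habs : (n : ℝ) * Real.pi < (j : ℝ) * Real.pi - t := by
      rw [abs_of_neg hlt] at hj
      linarith
    constructor
    · have h1 : ((s : ℝ) + n) < (j : ℝ) := by nlinarith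
      have h2 : ((s + n : ℤ) : ℝ) < ((j : ℤ) : ℝ) := by push_cast; linarith
      have h3 : s + n < j := by exact_mod_cast h2
      omega
    · nlinarith
  set ψ : {j : ℤ // (n : ℝ) * Real.pi < |t - j * Real.pi|} → ℤ :=
    fun j => psiFun t n j.1 with hψdef
  -- the comparison bound
  have key : ∀ j : {j : ℤ // (n : ℝ) * Real.pi < |t - j * Real.pi|},
      1 / (t - (j : ℤ) * Real.pi) ^ 2 ≤ Gseq n (ψ j) := by
    rintro ⟨j, hj⟩
    by_cases hpos : 0 < t - (j : ℝ) * Real.pi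
    · obtain ⟨hf1, hf2⟩ := hposfacts j hj hpos
      have hk : (((s - j - n).toNat : ℕ) : ℤ) = s - j - n := Int.toNat_of_nonneg (by omega)
      have hψj : ψ ⟨j, hj⟩ = -((((s - j - n).toNat : ℕ) : ℤ) + 1) := by
        simp only [hψdef, psiFun, ← hsdef, if_pos hpos]
      rw [hψj, Gseq_neg]
      have hcast : ((n : ℝ) + (((s - j - n).toNat : ℕ) : ℝ)) = (s : ℝ) - j := by
        have := congrArg (fun m : ℤ => (m : ℝ)) hk
        push_cast at this
        linarith
      simp only [gseq]
      apply aux_bound _ _ (by rw [hcast]; nlinarith)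
      rw [hcast, abs_of_pos hpos]
      exact hf2
    · obtain ⟨hf1, hf2⟩ := hnegfacts j hj hpos
      have hk : (((j - s - 1 - n).toNat : ℕ) : ℤ) = j - s - 1 - n := Int.toNat_of_nonneg (by omega)
      have hψj : ψ ⟨j, hj⟩ = (((j - s - 1 - n).toNat : ℕ) : ℤ) := by
        simp only [hψdef, psiFun, ← hsdef, if_neg hpos]
      rw [hψj, Gseq_nat]
      have hcast : ((n : ℝ) + (((j - s - 1 - n).toNat : ℕ) : ℝ)) = (j : ℝ) - s - 1 := by
        have := congrArg (fun m : ℤ => (m : ℝ)) hk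
        push_cast at this
        linarith
      simp only [gseq]
      apply aux_bound _ _ (by rw [hcast]; nlinarith)
      have hlt : t - (j : ℝ) * Real.pi < 0 := by
        have hne : t - (j : ℝ) * Real.pi ≠ 0 := by
          intro h0; rw [h0, abs_zero] at hj; linarith
        exact lt_of_le_of_ne (not_lt.mp hpos) hne
      rw [hcast, abs_of_neg hlt]
      linarith
  -- injectivity
  have hinj : Function.Injective ψ := by
    rintro ⟨j₁, hj₁⟩ ⟨j₂, hj₂⟩ heq
    apply Subtype.ext
    show j₁ = j₂
    simp only [hψdef, psiFun, ← hsdef] at heq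
    by_cases h1 : 0 < t - (j₁ : ℝ) * Real.pi <;>
      by_cases h2 : 0 < t - (j₂ : ℝ) * Real.pi
    · have e1 := (hposfacts j₁ hj₁ h1).1
      have e2 := (hposfacts j₂ hj₂ h2).1
      rw [if_pos h1, if_pos h2] at heq
      omega
    · rw [if_pos h1, if_neg h2] at heq
      omega
    · rw [if_neg h1, if_pos h2] at heq
      omega
    · have e1 := (hnegfacts j₁ hj₁ h1).1
      have e2 := (hnegfacts j₂ hj₂ h2).1
      rw [if_neg h1, if_neg h2] at heq
      omega
  have hsum : Summable (fun j : {j : ℤ // (n : ℝ) * Real.pi < |t - j * Real.pi|} =>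
      1 / (t - (j : ℤ) * Real.pi) ^ 2) := by
    apply Summable.of_nonneg_of_le (fun j => by positivity) key
    exact (Gseq_summable n).comp_injective hinj
  refine ⟨hsum, ?_⟩
  calc (∑' j : {j : ℤ // (n : ℝ) * Real.pi < |t - j * Real.pi|},
        1 / (t - (j : ℤ) * Real.pi) ^ 2)
      ≤ ∑' m : ℤ, Gseq n m :=
        Summable.tsum_le_tsum_of_inj ψ hinj (fun c _ => Gseq_nonneg n c) key hsum (Gseq_summable n)
    _ ≤ 2 / Real.pi ^ 2 * (1 / (n : ℝ) ^ 2 + 1 / (n : ℝ)) := tsum_Gseq_le n hn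
end

section
/- Let f : ℝ → ℝ satisfy f(t) = ∑_{j∈ℤ} f(jπ) sinc_F(t − jπ) with (f(jπ)) ∈ ℓ²(ℤ), where b ∈ ℓ¹(ℤ₊) and |sinc_F(s)| ≤ 2‖b‖_{ℓ¹}/|s| for all s ≠ 0. Define the adaptively truncated sum S_n(t) = ∑_{j : |t−jπ| ≤ nπ} f(jπ) sinc_F(t − jπ). Then for all t, |f(t) − S_n(t)|² ≤ 4‖b‖²_{ℓ¹} · (∑_{j∈ℤ} f(jπ)²) · (2/π²)(1/n² + 1/n). -/
/-!
Since the window `J_n(t)` is finite, the truncation error is the tail sum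
`∑_{j ∉ J_n(t)} f(jπ) sinc_F(t - jπ)`, and Cauchy–Schwarz bounds its square by
`∑ f(jπ)²` times `∑_{j ∉ J_n(t)} sinc_F(t - jπ)² ≤ 4‖b‖² ∑_{j ∉ J_n(t)} (t - jπ)⁻²`.
The `k`-th index to the right of the window lies at distance at least `(n + k)π` from `t`, and
symmetrically on the left, so this tail is at most `2π⁻² ∑_{k ≥ 0} (n + k)⁻² ≤ 2π⁻² (1/n² + 1/n)`.
-/

open Real Set

section CauchySchwarz

variable {ι : Type*} {a c : ι → ℝ}

theorem summable_mul_and_sq_tsum_mul_le (ha : Summable fun i => a i ^ 2)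
    (hc : Summable fun i => c i ^ 2) :
    Summable (fun i => a i * c i) ∧
      (∑' i, a i * c i) ^ 2 ≤ (∑' i, a i ^ 2) * ∑' i, c i ^ 2 := by
  let A : lp (fun _ : ι => ℝ) 2 := ⟨a, memℓp_gen (by simpa using ha)⟩
  let C : lp (fun _ : ι => ℝ) 2 := ⟨c, memℓp_gen (by simpa using hc)⟩
  have hCS := real_inner_mul_inner_self_le A C
  have hsum := lp.summable_inner (𝕜 := ℝ) A C
  simp only [lp.inner_eq_tsum, Real.inner_apply] at hCS hsum
  exact ⟨hsum, by simpa only [sq] using hCS⟩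

theorem sq_tsum_mul_sub_tsum_subtype_le {s : Set ι} (hs : s.Finite)
    (ha : Summable fun i => a i ^ 2) (hc : Summable fun i : ↥sᶜ => c i ^ 2) :
    (∑' i, a i * c i - ∑' i : s, a i * c i) ^ 2 ≤
      (∑' i, a i ^ 2) * ∑' i : ↥sᶜ, c i ^ 2 := by
  have := hs.to_subtype
  obtain ⟨hsum_compl, hCS⟩ := summable_mul_and_sq_tsum_mul_le (ha.subtype sᶜ) hc
  have hsum : Summable fun i => a i * c i :=
    summable_subtype_and_compl.mp ⟨Summable.of_finite, hsum_compl⟩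
  rw [← hsum.tsum_subtype_add_tsum_subtype_compl s, add_sub_cancel_left]
  exact hCS.trans <| mul_le_mul_of_nonneg_right
    (ha.tsum_subtype_le _ _ fun _ => sq_nonneg _) (tsum_nonneg fun _ => sq_nonneg _)

end CauchySchwarz

theorem summable_inv_sq_nat_add (n : ℕ) :
    Summable fun k : ℕ => (((n + k : ℕ) : ℝ) ^ 2)⁻¹ := by
  simpa [add_comm] using (summable_nat_add_iff n).mpr (Real.summable_nat_pow_inv.mpr one_lt_two)

theorem tsum_inv_sq_nat_add_le {n : ℕ} (hn : 1 ≤ n) :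
    ∑' k : ℕ, (((n + k : ℕ) : ℝ) ^ 2)⁻¹ ≤ 1 / n ^ 2 + 1 / n := by
  refine Real.tsum_le_of_sum_range_le (fun _ => by positivity) fun N => ?_
  have hIco : ∑ k ∈ Finset.range N, (((n + k : ℕ) : ℝ) ^ 2)⁻¹ =
      ∑ i ∈ Finset.Ico n (n + N), ((i : ℝ) ^ 2)⁻¹ := by
    rw [Finset.sum_Ico_eq_sum_range, Nat.add_sub_cancel_left]
  rw [hIco]
  calc ∑ i ∈ Finset.Ico n (n + N), ((i : ℝ) ^ 2)⁻¹
      ≤ ∑ i ∈ Finset.Icc n (n + N), ((i : ℝ) ^ 2)⁻¹ :=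
        Finset.sum_le_sum_of_subset_of_nonneg Finset.Ico_subset_Icc_self fun _ _ _ => by positivity
    _ = 1 / n ^ 2 + ∑ i ∈ Finset.Ioc n (n + N), ((i : ℝ) ^ 2)⁻¹ := by
        rw [Finset.Icc_eq_cons_Ioc (Nat.le_add_right n N), Finset.sum_cons, one_div]
    _ ≤ 1 / n ^ 2 + ((n : ℝ)⁻¹ - ((n + N : ℕ) : ℝ)⁻¹) := by
        gcongr; exact sum_Ioc_inv_sq_le_sub (by omega) (Nat.le_add_right n N)
    _ ≤ 1 / n ^ 2 + 1 / n := by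
        rw [one_div (n : ℝ)]; linarith [inv_nonneg.mpr (Nat.cast_nonneg (α := ℝ) (n + N))]

/-- The index set `J_n(t)` of the paper, for sampling step `h` (the paper has `h = π`). -/
def samplingWindow (h t : ℝ) (n : ℕ) : Set ℤ := {j | |t - j * h| ≤ n * h}

section SamplingWindow

variable {h : ℝ} (t : ℝ) {n : ℕ}

theorem samplingWindow_finite (hh : 0 < h) : (samplingWindow h t n).Finite := by
  refine (finite_Icc ⌈t / h - n⌉ ⌊t / h + n⌋).subset
    fun j (hj : |t - j * h| ≤ n * h) => ?_
  obtain ⟨hlo, hhi⟩ := abs_le.mp hj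
  refine ⟨Int.ceil_le.mpr ?_, Int.le_floor.mpr ?_⟩
  · rw [sub_le_iff_le_add, div_le_iff₀ hh]; linarith
  · rw [← sub_le_iff_le_add, le_div_iff₀ hh]; linarith

theorem floor_div_add_lt_of_lt (hh : 0 < h) {j : ℤ} (hj : t + n * h < j * h) :
    ⌊t / h⌋ + n < j := by
  have hx : t / h + n < j := by rw [div_add' _ _ _ hh.ne', div_lt_iff₀ hh]; linarith
  have : (⌊t / h⌋ : ℝ) + n < j := by linarith [Int.floor_le (t / h)]
  exact_mod_cast this

theorem inv_sq_sub_mul_le_of_lt (hh : 0 < h) (hn : 1 ≤ n) {j : ℤ} (hj : t + n * h < j * h) :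
    ((t - j * h) ^ 2)⁻¹ ≤ (h ^ 2)⁻¹ * (((n + (j - ⌊t / h⌋ - n - 1).toNat : ℕ) : ℝ) ^ 2)⁻¹ := by
  have hfloor := floor_div_add_lt_of_lt t hh hj
  have hcast : ((n + (j - ⌊t / h⌋ - n - 1).toNat : ℕ) : ℝ) = j - ⌊t / h⌋ - 1 := by
    have : ((n + (j - ⌊t / h⌋ - n - 1).toNat : ℕ) : ℤ) = j - ⌊t / h⌋ - 1 := by omega
    exact_mod_cast this
  have hpos : (0 : ℝ) < j - ⌊t / h⌋ - 1 := by
    have : (0 : ℤ) < j - ⌊t / h⌋ - 1 := by omega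
    exact_mod_cast this
  have hdist : (j - ⌊t / h⌋ - 1) * h ≤ j * h - t := by
    have := (div_lt_iff₀ hh).mp (Int.lt_floor_add_one (t / h)); nlinarith
  rw [hcast, ← mul_inv, ← mul_pow, mul_comm h, ← neg_sub, neg_sq]
  exact inv_anti₀ (by positivity) (pow_le_pow_left₀ (by positivity) hdist 2)

theorem summable_and_tsum_inv_sq_sub_mul_le_of_right (hh : 0 < h) (hn : 1 ≤ n) :
    Summable (fun j : {j : ℤ // t + n * h < j * h} => ((t - j * h) ^ 2)⁻¹) ∧
      ∑' j : {j : ℤ // t + n * h < j * h}, ((t - j * h) ^ 2)⁻¹ ≤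
        (h ^ 2)⁻¹ * (1 / n ^ 2 + 1 / n) := by
  set e : {j : ℤ // t + n * h < j * h} → ℕ := fun j => (j - ⌊t / h⌋ - n - 1).toNat
  have he : Function.Injective e := fun i j hij => by
    have := floor_div_add_lt_of_lt t hh i.2
    have := floor_div_add_lt_of_lt t hh j.2
    simp only [e] at hij
    exact Subtype.ext (by omega)
  have hw := (summable_inv_sq_nat_add n).mul_left (h ^ 2)⁻¹
  have hle (j : {j : ℤ // t + n * h < j * h}) := inv_sq_sub_mul_le_of_lt t hh hn j.2
  have hsum := (hw.comp_injective he).of_nonneg_of_le (fun _ => by positivity) hle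
  refine ⟨hsum, (hsum.tsum_le_tsum_of_inj e he (fun _ _ => by positivity) hle hw).trans ?_⟩
  rw [tsum_mul_left]
  gcongr
  exact tsum_inv_sq_nat_add_le hn

theorem summable_and_tsum_inv_sq_sub_mul_le_of_left (hh : 0 < h) (hn : 1 ≤ n) :
    Summable (fun j : {j : ℤ // j * h < t - n * h} => ((t - j * h) ^ 2)⁻¹) ∧
      ∑' j : {j : ℤ // j * h < t - n * h}, ((t - j * h) ^ 2)⁻¹ ≤
        (h ^ 2)⁻¹ * (1 / n ^ 2 + 1 / n) := by
  let neg : {j : ℤ // j * h < t - n * h} ≃ {j : ℤ // -t + n * h < j * h} :=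
    (Equiv.neg ℤ).subtypeEquiv fun j => by
      simp only [Equiv.neg_apply, Int.cast_neg]; constructor <;> intro <;> linarith
  have hneg (j : {j : ℤ // j * h < t - n * h}) :
      ((-t - (neg j : ℤ) * h) ^ 2)⁻¹ = ((t - j * h) ^ 2)⁻¹ := by
    simp only [neg, Equiv.subtypeEquiv_apply, Equiv.neg_apply, Int.cast_neg]; ring
  obtain ⟨hsum, hle⟩ := summable_and_tsum_inv_sq_sub_mul_le_of_right (-t) hh hn
  rw [← neg.summable_iff] at hsum
  rw [← neg.tsum_eq] at hle
  simp only [Function.comp_def, hneg] at hsum hle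
  exact ⟨hsum, hle⟩

theorem summable_and_tsum_inv_sq_sub_mul_compl_samplingWindow_le (hh : 0 < h) (hn : 1 ≤ n) :
    Summable (fun j : ↥(samplingWindow h t n)ᶜ => ((t - j * h) ^ 2)⁻¹) ∧
      ∑' j : ↥(samplingWindow h t n)ᶜ, ((t - j * h) ^ 2)⁻¹ ≤ 2 / h ^ 2 * (1 / n ^ 2 + 1 / n) := by
  have hnh : 0 ≤ n * h := by positivity
  have hcompl :
      (samplingWindow h t n)ᶜ = {j : ℤ | t + n * h < j * h} ∪ {j | j * h < t - n * h} := by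
    ext j
    simp only [samplingWindow, mem_compl_iff, mem_ofPred_eq, mem_union, not_le, lt_abs]
    constructor <;> rintro (hj | hj) <;> first | (left; linarith) | (right; linarith)
  have hdisj : Disjoint {j : ℤ | t + n * h < j * h} {j | j * h < t - n * h} :=
    disjoint_left.mpr fun j (hr : t + n * h < j * h) (hl : j * h < t - n * h) => by linarith
  obtain ⟨hsumR, hleR⟩ := summable_and_tsum_inv_sq_sub_mul_le_of_right t hh hn
  obtain ⟨hsumL, hleL⟩ := summable_and_tsum_inv_sq_sub_mul_le_of_left t hh hn
  have hsum :=
    (hsumR.hasSum.add_disjoint (f := fun j : ℤ => ((t - j * h) ^ 2)⁻¹) hdisj hsumL.hasSum)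
  rw [hcompl]
  refine ⟨hsum.summable, hsum.tsum_eq.trans_le ?_⟩
  calc _ ≤ (h ^ 2)⁻¹ * (1 / n ^ 2 + 1 / n) + (h ^ 2)⁻¹ * (1 / n ^ 2 + 1 / n) :=
        add_le_add hleR hleL
    _ = 2 / h ^ 2 * (1 / n ^ 2 + 1 / n) := by ring

theorem summable_and_tsum_sq_compl_samplingWindow_le {g : ℝ → ℝ} {C : ℝ}
    (hg : ∀ s, s ≠ 0 → |g s| ≤ C / |s|) (hh : 0 < h) (hn : 1 ≤ n) :
    Summable (fun j : ↥(samplingWindow h t n)ᶜ => g (t - j * h) ^ 2) ∧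
      ∑' j : ↥(samplingWindow h t n)ᶜ, g (t - j * h) ^ 2 ≤
        C ^ 2 * (2 / h ^ 2 * (1 / n ^ 2 + 1 / n)) := by
  obtain ⟨hq, hq_le⟩ := summable_and_tsum_inv_sq_sub_mul_compl_samplingWindow_le t hh hn
  have hle (j : ↥(samplingWindow h t n)ᶜ) : g (t - j * h) ^ 2 ≤ C ^ 2 * ((t - j * h) ^ 2)⁻¹ := by
    have hne : t - j * h ≠ 0 := fun h0 =>
      j.2 (show |t - j * h| ≤ n * h by rw [h0, abs_zero]; positivity)
    calc _ = |g (t - j * h)| ^ 2 := (sq_abs _).symm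
      _ ≤ (C / |t - j * h|) ^ 2 := pow_le_pow_left₀ (abs_nonneg _) (hg _ hne) 2
      _ = _ := by rw [div_pow, sq_abs, div_eq_mul_inv]
  have hsum := (hq.mul_left _).of_nonneg_of_le (fun _ => sq_nonneg _) hle
  refine ⟨hsum, (hsum.tsum_le_tsum hle (hq.mul_left _)).trans ?_⟩
  rw [tsum_mul_left]
  gcongr

end SamplingWindow

theorem truncation_error_sq_general (b : ℕ → ℝ)
    (sincF : ℝ → ℝ)
    (hdecay : ∀ s : ℝ, s ≠ 0 → |sincF s| ≤ 2 * (∑' n : ℕ, |b n|) / |s|)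
    (f : ℝ → ℝ)
    (hsamp : Summable fun j : ℤ => (f (j * Real.pi)) ^ 2)
    (hf : ∀ t : ℝ, f t = ∑' j : ℤ, f (j * Real.pi) * sincF (t - j * Real.pi))
    (t : ℝ) (n : ℕ) (hn : 1 ≤ n) :
    (f t - ∑' j : {j : ℤ // |t - j * Real.pi| ≤ (n : ℝ) * Real.pi},
        f ((j : ℤ) * Real.pi) * sincF (t - (j : ℤ) * Real.pi)) ^ 2 ≤
      4 * (∑' k : ℕ, |b k|) ^ 2 * (∑' j : ℤ, (f (j * Real.pi)) ^ 2) *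
        (2 / Real.pi ^ 2 * (1 / (n : ℝ) ^ 2 + 1 / (n : ℝ))) := by
  obtain ⟨hsinc, hsinc_le⟩ := summable_and_tsum_sq_compl_samplingWindow_le t hdecay pi_pos hn
  have herr := sq_tsum_mul_sub_tsum_subtype_le (a := fun j : ℤ => f (j * π))
    (c := fun j : ℤ => sincF (t - j * π)) (samplingWindow_finite t pi_pos) hsamp hsinc
  rw [← hf t] at herr
  refine herr.trans ?_
  calc _ ≤ (∑' j : ℤ, f (j * π) ^ 2) *
        ((2 * ∑' k : ℕ, |b k|) ^ 2 * (2 / π ^ 2 * (1 / n ^ 2 + 1 / n))) :=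
        mul_le_mul_of_nonneg_left hsinc_le (tsum_nonneg fun _ => sq_nonneg _)
    _ = _ := by ring

theorem truncation_error_sq (b : ℕ → ℝ) (hb : Summable fun n => |b n|)
    (sincF : ℝ → ℝ)
    (hdecay : ∀ s : ℝ, s ≠ 0 → |sincF s| ≤ 2 * (∑' n : ℕ, |b n|) / |s|)
    (f : ℝ → ℝ)
    (hsamp : Summable fun j : ℤ => (f (j * Real.pi)) ^ 2)
    (hf : ∀ t : ℝ, f t = ∑' j : ℤ, f (j * Real.pi) * sincF (t - j * Real.pi))
    (t : ℝ) (n : ℕ) (hn : 1 ≤ n) :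
    (f t - ∑' j : {j : ℤ // |t - j * Real.pi| ≤ (n : ℝ) * Real.pi},
        f ((j : ℤ) * Real.pi) * sincF (t - (j : ℤ) * Real.pi)) ^ 2 ≤
      4 * (∑' k : ℕ, |b k|) ^ 2 * (∑' j : ℤ, (f (j * Real.pi)) ^ 2) *
        (2 / Real.pi ^ 2 * (1 / (n : ℝ) ^ 2 + 1 / (n : ℝ))) :=
  truncation_error_sq_general b sincF hdecay f hsamp hf t n hn
end
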